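/- arXiv:math/0305155 — 2 statements merged into one kernel-verified Lean document; each statement's English description precedes it below -/
import Mathlib

section
/- Let p be a prime, and let D be an l×m integer matrix and D' be an m×n integer matrix with D·D' = 0 (so that mapping by D' followed by D gives a three-term cochain complex ℤⁿ → ℤᵐ → ℤˡ). Then the dimension over the field 𝔽_p = ℤ/pℤ of the cohomology ker(D_p)/im(D'_p) (where D_p, D'_p denote the entrywise reductions of D, D' modulo p, acting by matrix–vector multiplication on 𝔽_pᵐ and 𝔽_pⁿ) is greater than or equal to the dimension over ℚ of the cohomology ker(D_ℚ)/im(D'_ℚ) (where D_ℚ, D'_ℚ denote the entrywise casts of D, D' to ℚ). -/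
open Matrix

/-- The cohomology `ker A / im B` of a three-term complex of linear maps given by
matrices `A : K^m → K^l` and `B : K^n → K^m` (acting by matrix-vector multiplication). -/
abbrev matrixCohomology {K : Type*} [Field K] {l m n : ℕ}
    (A : Matrix (Fin l) (Fin m) K) (B : Matrix (Fin m) (Fin n) K) :=
  LinearMap.ker A.mulVecLin ⧸
    (LinearMap.range B.mulVecLin).comap (LinearMap.ker A.mulVecLin).subtype

/-!
Over any field the cohomology has dimension `m - rank D - rank D'`, so it suffices that reducing
an integer matrix modulo `p` cannot increase its rank. The column lattice of an integer matrix is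
free of some rank `r`. A `ℤ`-basis of it stays linearly independent over `ℚ`, so the rational rank
is `r`, while its reduction modulo `p` still spans the column space over `𝔽_p`, so the modular
rank is at most `r`.
-/

section Span

variable {R S M N ι : Type*} [CommSemiring R] [Semiring S] [Algebra R S] [AddCommMonoid M]
  [Module R M] [AddCommMonoid N] [Module R N] [Module S N] [IsScalarTower R S N]

theorem Submodule.span_image_span_of_tower (f : M →ₗ[R] N) (s : Set M) :
    Submodule.span S (f '' Submodule.span R s) = Submodule.span S (f '' s) := by
  rw [← Submodule.map_coe, ← Submodule.span_image, Submodule.span_span_of_tower]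

theorem Submodule.span_image_eq_span_basis (f : M →ₗ[R] N) {L : Submodule R M}
    (b : Module.Basis ι R L) :
    Submodule.span S (f '' L) = Submodule.span S (Set.range fun i ↦ f (b i)) := by
  have hL := (Submodule.span_range_subtype_eq_top_iff L fun i ↦ (b i).2).1 b.span_eq
  conv_lhs => rw [← hL, Submodule.span_image_span_of_tower, ← Set.range_comp]
  rfl

end Span

namespace Matrix

variable {m n : Type*} [Fintype n]

theorem range_mulVecLin_map_algebraMap {R K : Type*} [CommSemiring R] [CommSemiring K]
    [Algebra R K] (A : Matrix m n R) :
    LinearMap.range (A.map (algebraMap R K)).mulVecLin =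
      Submodule.span K ((Algebra.linearMap R K).compLeft m '' LinearMap.range A.mulVecLin) := by
  rw [range_mulVecLin, range_mulVecLin, Submodule.span_image_span_of_tower, ← Set.range_comp]
  rfl

section PID

variable {R K : Type*} [CommRing R] [IsDomain R] [IsPrincipalIdealRing R] [Field K] [Algebra R K]

theorem rank_map_algebraMap_le (A : Matrix m n R) :
    (A.map (algebraMap R K)).rank ≤ Module.finrank R (LinearMap.range A.mulVecLin) := by
  let b := Module.Free.chooseBasis R (LinearMap.range A.mulVecLin)
  rw [Matrix.rank, range_mulVecLin_map_algebraMap, Submodule.span_image_eq_span_basis _ b,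
    Module.finrank_eq_card_basis b]
  exact finrank_range_le_card _

theorem rank_map_algebraMap_fractionRing [IsFractionRing R K] (A : Matrix m n R) :
    (A.map (algebraMap R K)).rank = Module.finrank R (LinearMap.range A.mulVecLin) := by
  let b := Module.Free.chooseBasis R (LinearMap.range A.mulVecLin)
  rw [Matrix.rank, range_mulVecLin_map_algebraMap, Submodule.span_image_eq_span_basis _ b,
    Module.finrank_eq_card_basis b]
  apply finrank_span_eq_card
  rw [← LinearIndependent.iff_fractionRing R K]
  have hinj : Function.Injective ((Algebra.linearMap R K).compLeft m) :=
    (IsFractionRing.injective R K).comp_left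
  exact (b.linearIndependent.map' _ (Submodule.ker_subtype _)).map' _ (LinearMap.ker_eq_bot.2 hinj)

end PID

theorem rank_map_intCast_le_rank_map_intCast_rat (K : Type*) [Field K] (A : Matrix m n ℤ) :
    (A.map (Int.cast : ℤ → K)).rank ≤ (A.map (Int.cast : ℤ → ℚ)).rank :=
  (A.rank_map_algebraMap_le (K := K)).trans_eq (A.rank_map_algebraMap_fractionRing (K := ℚ)).symm

end Matrix

theorem Matrix.map_intCast_mul_eq_zero {l m n : Type*} [Fintype m] (K : Type*) [Ring K]
    {A : Matrix l m ℤ} {B : Matrix m n ℤ} (h : A * B = 0) :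
    A.map (Int.cast : ℤ → K) * B.map (Int.cast : ℤ → K) = 0 := by
  simpa [h] using (Matrix.map_mul (L := A) (M := B) (f := Int.castRingHom K)).symm

theorem finrank_matrixCohomology_add_rank_add_rank {K : Type*} [Field K] {l m n : ℕ}
    {A : Matrix (Fin l) (Fin m) K} {B : Matrix (Fin m) (Fin n) K} (h : A * B = 0) :
    Module.finrank K (matrixCohomology A B) + A.rank + B.rank = m := by
  have hBA : LinearMap.range B.mulVecLin ≤ LinearMap.ker A.mulVecLin := by
    rw [LinearMap.range_le_ker_iff, ← Matrix.mulVecLin_mul, h, Matrix.mulVecLin_zero]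
  have hB : Module.finrank K ((LinearMap.range B.mulVecLin).comap
      (LinearMap.ker A.mulVecLin).subtype) = B.rank :=
    (Submodule.comapSubtypeEquivOfLe hBA).finrank_eq
  calc Module.finrank K (matrixCohomology A B) + A.rank + B.rank
      = A.rank + Module.finrank K (LinearMap.ker A.mulVecLin) := by
        rw [← Submodule.finrank_quotient_add_finrank
          ((LinearMap.range B.mulVecLin).comap (LinearMap.ker A.mulVecLin).subtype), hB]
        ring
    _ = m := by
        rw [Matrix.rank, LinearMap.finrank_range_add_finrank_ker, Module.finrank_fin_fun]

/-- For an integer three-term complex `ℤⁿ → ℤᵐ → ℤˡ` given by `D·D' = 0`, the dimension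
of the cohomology over `𝔽_p` is at least the dimension of the cohomology over `ℚ`. -/
theorem modular_cohomology_dim_ge (p : ℕ) [Fact p.Prime] {l m n : ℕ}
    (D : Matrix (Fin l) (Fin m) ℤ) (D' : Matrix (Fin m) (Fin n) ℤ)
    (h : D * D' = 0) :
    Module.finrank ℚ
        (matrixCohomology (D.map (Int.cast : ℤ → ℚ)) (D'.map (Int.cast : ℤ → ℚ))) ≤
      Module.finrank (ZMod p)
        (matrixCohomology (D.map (Int.cast : ℤ → ZMod p))
          (D'.map (Int.cast : ℤ → ZMod p))) := by
  have hℚ := finrank_matrixCohomology_add_rank_add_rank (map_intCast_mul_eq_zero ℚ h)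
  have hp := finrank_matrixCohomology_add_rank_add_rank (map_intCast_mul_eq_zero (ZMod p) h)
  have hD := D.rank_map_intCast_le_rank_map_intCast_rat (ZMod p)
  have hD' := D'.rank_map_intCast_le_rank_map_intCast_rat (ZMod p)
  omega
end

section
/- Let p be a prime, and let D be an l×m integer matrix and D' be an m×n integer matrix with D·D' = 0. If the cohomology ker(D_p)/im(D'_p) over 𝔽_p = ℤ/pℤ is the zero space, then the cohomology ker(D_ℚ)/im(D'_ℚ) over ℚ is also the zero space. (Equivalently: non-trivial rational cohomology classes can exist only where the modular cohomology is non-trivial.) -/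
/-!
When `A * B = 0` over a field, `ker A / im B` vanishes iff `rank A + rank B` is at least the
middle dimension, by rank–nullity. Reducing an integer matrix mod `p` can only lower its rank:
columns that are independent mod `p` are independent over `ℤ` (divide a relation by the gcd of
its coefficients; its reduction mod `p` is then nontrivial), hence over `ℚ`.
-/

open Matrix

theorem linearIndependent_int_of_zmod {p : ℕ} (hp : p ≠ 1) {ι κ : Type*} {u : ι → κ → ℤ}
    (hu : LinearIndependent (ZMod p) fun j i ↦ (u j i : ZMod p)) :
    LinearIndependent ℤ u := by
  classical
  rw [linearIndependent_iff'] at hu ⊢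
  intro s g hg i hi
  by_contra hgi
  obtain ⟨g', hg', hgcd⟩ := s.extract_gcd g ⟨i, hi⟩
  have hgcd_ne : s.gcd g ≠ 0 := fun h ↦ hgi (Finset.gcd_eq_zero_iff.1 h i hi)
  have hg'_rel : ∑ j ∈ s, g' j • u j = 0 := by
    refine smul_right_injective _ hgcd_ne ?_
    simp only [smul_zero, Finset.smul_sum, smul_smul]
    rw [← hg]
    exact Finset.sum_congr rfl fun j hj ↦ by rw [← hg' j hj]
  have hg'_mod : ∑ j ∈ s, (g' j : ZMod p) • (fun i ↦ (u j i : ZMod p)) = 0 := by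
    funext k
    simpa using congrArg (Int.cast : ℤ → ZMod p) (congrFun hg'_rel k)
  have hdvd : (p : ℤ) ∣ s.gcd g' :=
    Finset.dvd_gcd fun j hj ↦ (ZMod.intCast_zmod_eq_zero_iff_dvd _ _).1 (hu s _ hg'_mod j hj)
  rw [hgcd, Int.natCast_dvd_ofNat, Nat.dvd_one] at hdvd
  exact hp hdvd

theorem linearIndependent_rat_of_zmod {p : ℕ} (hp : p ≠ 1) {ι κ : Type*} {u : ι → κ → ℤ}
    (hu : LinearIndependent (ZMod p) fun j i ↦ (u j i : ZMod p)) :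
    LinearIndependent ℚ fun j i ↦ (u j i : ℚ) := by
  rw [← LinearIndependent.iff_fractionRing ℤ ℚ]
  refine (linearIndependent_int_of_zmod hp hu).map' ((Algebra.linearMap ℤ ℚ).compLeft κ) ?_
  exact LinearMap.ker_eq_bot.2 fun x y hxy ↦ funext fun k ↦ Int.cast_injective (congrFun hxy k)

theorem Matrix.rank_map_zmod_le_rank_map_rat {p : ℕ} [Fact p.Prime] {m n : Type*} [Fintype n]
    (M : Matrix m n ℤ) :
    (M.map (Int.cast : ℤ → ZMod p)).rank ≤ (M.map (Int.cast : ℤ → ℚ)).rank := by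
  obtain ⟨κ, a, ha, hspan, hli⟩ :=
    exists_linearIndependent' (ZMod p) (M.map (Int.cast : ℤ → ZMod p)).col
  have : Fintype κ := Fintype.ofInjective a ha
  have hliℚ : LinearIndependent ℚ ((M.map (Int.cast : ℤ → ℚ)).col ∘ a) :=
    linearIndependent_rat_of_zmod (Fact.out : p.Prime).ne_one hli
  have : Module.Finite ℚ (Submodule.span ℚ (Set.range (M.map (Int.cast : ℤ → ℚ)).col)) :=
    FiniteDimensional.span_of_finite ℚ (Set.finite_range _)
  rw [rank_eq_finrank_span_cols, rank_eq_finrank_span_cols, ← hspan, finrank_span_eq_card hli,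
    ← finrank_span_eq_card hliℚ]
  exact Submodule.finrank_mono (Submodule.span_mono (Set.range_comp_subset_range _ _))

theorem matrixCohomology_subsingleton_iff {K : Type*} [Field K] {l m n : ℕ}
    {A : Matrix (Fin l) (Fin m) K} {B : Matrix (Fin m) (Fin n) K} (hAB : A * B = 0) :
    Subsingleton (matrixCohomology A B) ↔ m ≤ A.rank + B.rank := by
  rw [matrixCohomology, Submodule.Quotient.subsingleton_iff, Submodule.comap_subtype_eq_top]
  have hrange : LinearMap.range B.mulVecLin ≤ LinearMap.ker A.mulVecLin := by
    rw [LinearMap.range_le_ker_iff, ← mulVecLin_mul, hAB, mulVecLin_zero]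
  have hrank_nullity := LinearMap.finrank_range_add_finrank_ker A.mulVecLin
  rw [Module.finrank_fintype_fun_eq_card, Fintype.card_fin] at hrank_nullity
  unfold Matrix.rank
  constructor
  · intro hker
    have := Submodule.finrank_mono hker
    omega
  · intro hm
    exact (Submodule.eq_of_le_of_finrank_le hrange (by omega)).ge

theorem Matrix.map_intCast_mul_map_intCast_eq_zero {R : Type*} [Ring R] {l m n : Type*}
    [Fintype m] {A : Matrix l m ℤ} {B : Matrix m n ℤ} (hAB : A * B = 0) :
    A.map (Int.cast : ℤ → R) * B.map (Int.cast : ℤ → R) = 0 := by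
  have hmap := congrArg (·.map (Int.castRingHom R)) hAB
  rwa [Matrix.map_mul, Matrix.map_zero _ (map_zero _)] at hmap

/-- If the cohomology of the reduction mod `p` of an integer three-term complex is the zero
space, then the cohomology of the complex over `ℚ` is also the zero space. -/
theorem rational_cohomology_trivial_of_modular_trivial (p : ℕ) [Fact p.Prime] {l m n : ℕ}
    (D : Matrix (Fin l) (Fin m) ℤ) (D' : Matrix (Fin m) (Fin n) ℤ)
    (h : D * D' = 0)
    (hp : Subsingleton
      (matrixCohomology (D.map (Int.cast : ℤ → ZMod p)) (D'.map (Int.cast : ℤ → ZMod p)))) :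
    Subsingleton
      (matrixCohomology (D.map (Int.cast : ℤ → ℚ)) (D'.map (Int.cast : ℤ → ℚ))) := by
  rw [matrixCohomology_subsingleton_iff (map_intCast_mul_map_intCast_eq_zero h)] at hp ⊢
  exact hp.trans (add_le_add D.rank_map_zmod_le_rank_map_rat D'.rank_map_zmod_le_rank_map_rat)
end
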